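/- For all N, t > 0, ∫_ℝ (∫_0^N p_{s(t-s)/t}(y - (s/t)x) dx)² dy = (Nt/(πs)) ∫_ℝ φ(z) exp(-t(t-s)z²/(N²s)) dz for every s ∈ (0,t), where φ(z) = (1-cos z)/z². -/

import Mathlib

open Real MeasureTheory Set intervalIntegral Filter

noncomputable def heatK (t x : ℝ) : ℝ := (2 * π * t) ^ (-(1:ℝ)/2) * Real.exp (-x^2 / (2*t))

noncomputable def φ (z : ℝ) : ℝ := if z = 0 then 1/2 else (1 - Real.cos z) / z ^ 2

lemma rpow_neg_half {x : ℝ} (hx : 0 < x) : x ^ (-(1:ℝ)/2) = (Real.sqrt x)⁻¹ := by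
  rw [show (-(1:ℝ)/2) = -(1/2) by ring, Real.rpow_neg hx.le, ← Real.sqrt_eq_rpow]

lemma gauss_shift {b : ℝ} (m : ℝ) :
    ∫ x : ℝ, Real.exp (-b * (x - m)^2) = ∫ x : ℝ, Real.exp (-b * x^2) :=
  MeasureTheory.integral_sub_right_eq_self (μ := volume) (fun u : ℝ => Real.exp (-b * u^2)) m

lemma gauss_shift' {b : ℝ} (hb : 0 < b) (m : ℝ) :
    ∫ x : ℝ, Real.exp (-b * (x - m)^2) = Real.sqrt (π / b) :=
  (gauss_shift m).trans (integral_gaussian b)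

lemma cos_gauss {b : ℝ} (hb : 0 < b) (w : ℝ) :
    ∫ z : ℝ, Real.cos (w * z) * Real.exp (-b * z^2)
      = Real.sqrt (π / b) * Real.exp (-w^2 / (4*b)) := by
  have hb' : (0:ℝ) < ((b:ℂ)).re := by simpa using hb
  have key := fourierIntegral_gaussian (b := (b:ℂ)) hb' (w:ℂ)
  have hint : Integrable (fun z : ℝ => Complex.exp (Complex.I * (w:ℂ) * (z:ℂ)) * Complex.exp (-(b:ℂ) * (z:ℂ)^2)) (volume) := by
    have h := integrable_cexp_quadratic (b := (b:ℂ)) hb' (Complex.I * w) 0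
    apply h.congr
    filter_upwards with z
    rw [← Complex.exp_add]
    ring_nf
  have hre := integral_re (μ := volume) hint
  rw [key] at hre
  have hlhs : ∀ z : ℝ, (Complex.exp (Complex.I * (w:ℂ) * (z:ℂ)) * Complex.exp (-(b:ℂ) * (z:ℂ)^2)).re
      = Real.cos (w * z) * Real.exp (-b * z^2) := by
    intro z
    rw [← Complex.exp_add, Complex.exp_re]
    simp [← Complex.ofReal_pow, mul_comm]
  have hrhs : (((π:ℂ) / (b:ℂ)) ^ ((1:ℂ) / 2) * Complex.exp (-(w:ℂ) ^ 2 / (4 * (b:ℂ)))).re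
      = Real.sqrt (π / b) * Real.exp (-w^2 / (4*b)) := by
    have h1 : ((π:ℂ) / (b:ℂ)) ^ ((1:ℂ) / 2) = ((Real.sqrt (π / b) : ℝ) : ℂ) := by
      rw [show ((π:ℂ)/(b:ℂ)) = ((π/b : ℝ) : ℂ) by push_cast; ring,
        show ((1:ℂ)/2) = (((1:ℝ)/2 : ℝ) : ℂ) by norm_num,
        ← Complex.ofReal_cpow (by positivity) ((1:ℝ)/2)]
      norm_num [Real.sqrt_eq_rpow]
    have h2 : Complex.exp (-(w:ℂ) ^ 2 / (4 * (b:ℂ))) = ((Real.exp (-w^2/(4*b)) : ℝ) : ℂ) := by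
      rw [show -(w:ℂ)^2/(4*(b:ℂ)) = ((-w^2/(4*b) : ℝ) : ℂ) by push_cast; ring,
        ← Complex.ofReal_exp]
    rw [h1, h2, ← Complex.ofReal_mul, Complex.ofReal_re]
  simp only [RCLike.re_to_complex] at hre
  rw [← hrhs, ← hre]
  congr 1; ext z; rw [← hlhs z]

lemma heat_conv {σ : ℝ} (hσ : 0 < σ) (u v : ℝ) :
    ∫ y : ℝ, heatK σ (y - u) * heatK σ (y - v) = heatK (2*σ) (u - v) := by
  have h2πσ : 0 < 2*π*σ := by positivity
  have hπσ : 0 < π*σ := by positivity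
  have key : ∀ y : ℝ, heatK σ (y - u) * heatK σ (y - v)
      = (((2*π*σ))⁻¹ * Real.exp (-(u-v)^2/(4*σ))) * Real.exp (-(1/σ) * (y - (u+v)/2)^2) := by
    intro y
    simp only [heatK, rpow_neg_half h2πσ]
    rw [mul_mul_mul_comm, ← Real.exp_add, mul_assoc ((2*π*σ)⁻¹), ← Real.exp_add]
    congr 1
    · rw [← mul_inv, Real.mul_self_sqrt h2πσ.le]
    · field_simp; ring
  rw [MeasureTheory.integral_congr_ae (Filter.Eventually.of_forall key),
    MeasureTheory.integral_const_mul, gauss_shift' (b := 1/σ) (by positivity) ((u+v)/2)]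
  have hsq : Real.sqrt (π / (1/σ)) = Real.sqrt (π * σ) := by congr 1; field_simp
  rw [hsq, heatK, rpow_neg_half (by positivity)]
  have h4 : Real.sqrt (2*π*(2*σ)) = 2 * Real.sqrt (π*σ) := by
    rw [show 2*π*(2*σ) = 2^2*(π*σ) by ring, Real.sqrt_mul (by positivity), Real.sqrt_sq (by norm_num)]
  rw [h4]
  have hss := Real.mul_self_sqrt hπσ.le
  rw [show -(u-v)^2/(2*(2*σ)) = -(u-v)^2/(4*σ) by ring]
  have hconst : (2*π*σ)⁻¹ * Real.sqrt (π*σ) = (2*Real.sqrt (π*σ))⁻¹ := by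
    refine (inv_eq_of_mul_eq_one_right ?_).symm
    calc (2*Real.sqrt (π*σ)) * ((2*π*σ)⁻¹ * Real.sqrt (π*σ))
        = (2*(Real.sqrt (π*σ)*Real.sqrt (π*σ))) * (2*π*σ)⁻¹ := by ring
    _ = 1 := by rw [hss]; field_simp
  rw [mul_right_comm, hconst]

lemma heatK_eq {σ : ℝ} (hσ : 0 < σ) (x : ℝ) :
    heatK σ x = (Real.sqrt (2*π*σ))⁻¹ * Real.exp (-(1/(2*σ)) * x^2) := by
  rw [heatK, rpow_neg_half (by positivity)]
  congr 1
  field_simp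

lemma heatK_cont {σ : ℝ} : Continuous (heatK σ) := by
  unfold heatK
  fun_prop

lemma heatK_integrable {σ : ℝ} (hσ : 0 < σ) : Integrable (heatK σ) := by
  have h : Integrable (fun x : ℝ => Real.exp (-(1/(2*σ)) * x^2)) :=
    integrable_exp_neg_mul_sq (by positivity)
  have := h.const_mul ((Real.sqrt (2*π*σ))⁻¹)
  apply this.congr
  filter_upwards with x
  rw [heatK_eq hσ]

lemma heatK_nonneg {σ : ℝ} (hσ : 0 < σ) (x : ℝ) : 0 ≤ heatK σ x := by
  rw [heatK_eq hσ]
  positivity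

lemma heatK_le {σ : ℝ} (hσ : 0 < σ) (x : ℝ) : heatK σ x ≤ (Real.sqrt (2*π*σ))⁻¹ := by
  rw [heatK_eq hσ]
  have h1 : Real.exp (-(1/(2*σ)) * x^2) ≤ 1 := by
    rw [Real.exp_le_one_iff]
    have : 0 ≤ (1/(2*σ)) * x^2 := by positivity
    linarith
  have h2 : (0:ℝ) ≤ (Real.sqrt (2*π*σ))⁻¹ := by positivity
  nlinarith

lemma integrable_helper {β : Type*} [MeasurableSpace β] {ν : Measure β} [IsFiniteMeasure ν]
    {F : β × ℝ → ℝ} (hF : AEStronglyMeasurable F (ν.prod volume))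
    (hsec : ∀ p : β, Integrable (fun y => F (p, y)) volume)
    {K : ℝ} (hK : ∀ p : β, (∫ y : ℝ, ‖F (p, y)‖) ≤ K) :
    Integrable F (ν.prod volume) := by
  haveI : SFinite (volume : Measure ℝ) := inferInstance
  refine (integrable_prod_iff hF).mpr ⟨Filter.Eventually.of_forall hsec, ?_⟩
  refine Integrable.mono' (integrable_const K) hF.norm.integral_prod_right' ?_
  filter_upwards with p
  rw [Real.norm_eq_abs, abs_of_nonneg (integral_nonneg fun y => norm_nonneg _)]
  exact hK p

lemma integrable_of_bdd_cont {ν : Measure (ℝ×ℝ)} [IsFiniteMeasure ν] {f : ℝ×ℝ → ℝ}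
    (hf : Continuous f) {C : ℝ} (hC : ∀ p, ‖f p‖ ≤ C) : Integrable f ν :=
  Integrable.mono' (integrable_const C) hf.aestronglyMeasurable (Filter.Eventually.of_forall hC)


lemma phi_eq (z : ℝ) : φ z = (1/2) * ∫ r in (0:ℝ)..1, ∫ q in (0:ℝ)..1, Real.cos (z*(r-q)) := by
  rcases eq_or_ne z 0 with h | h
  · simp [φ, h]
  · have inner : ∀ r : ℝ, (∫ q in (0:ℝ)..1, Real.cos (z*(r-q)))
        = z⁻¹ * (Real.sin (z*r) - Real.sin (z*(r-1))) := by
      intro r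
      rw [intervalIntegral.integral_comp_sub_left (fun u => Real.cos (z*u)) r,
        intervalIntegral.integral_comp_mul_left (fun u => Real.cos u) h,
        integral_cos]
      simp [smul_eq_mul]
    simp_rw [inner]
    rw [intervalIntegral.integral_const_mul]
    have h1 : (∫ r in (0:ℝ)..1, (Real.sin (z*r) - Real.sin (z*(r-1))))
        = (∫ r in (0:ℝ)..1, Real.sin (z*r)) - ∫ r in (0:ℝ)..1, Real.sin (z*(r-1)) := by
      apply intervalIntegral.integral_sub
      · exact (Real.continuous_sin.comp (continuous_const.mul continuous_id)).intervalIntegrable _ _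
      · exact (Real.continuous_sin.comp (continuous_const.mul (continuous_id.sub continuous_const))).intervalIntegrable _ _
    have h2 : (∫ r in (0:ℝ)..1, Real.sin (z*r)) = z⁻¹ * (1 - Real.cos z) := by
      rw [intervalIntegral.integral_comp_mul_left (fun u => Real.sin u) h, integral_sin]
      simp [smul_eq_mul]
    have h3 : (∫ r in (0:ℝ)..1, Real.sin (z*(r-1))) = z⁻¹ * (Real.cos z - 1) := by
      rw [show (fun r : ℝ => Real.sin (z*(r-1))) = (fun r => (fun u => Real.sin (z*u)) (r - 1)) from rfl,
        intervalIntegral.integral_comp_sub_right (fun u => Real.sin (z*u)) 1,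
        intervalIntegral.integral_comp_mul_left (fun u => Real.sin u) h, integral_sin]
      norm_num [smul_eq_mul, Real.cos_neg]
    rw [h1, h2, h3, φ, if_neg h]
    field_simp
    ring

lemma fubini_lhs {σ a N : ℝ} (hσ : 0 < σ) (ha : 0 < a) (hN : 0 < N) :
    ∫ y : ℝ, (∫ x in (0:ℝ)..N, heatK σ (y - a * x))^2
      = ∫ x in Ioc (0:ℝ) N, ∫ x' in Ioc (0:ℝ) N, heatK (2*σ) (a*x - a*x') := by
  set μ1 : Measure ℝ := volume.restrict (Ioc (0:ℝ) N) with hμ1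
  haveI hfin : IsFiniteMeasure μ1 :=
    ⟨by rw [hμ1, Measure.restrict_apply_univ, Real.volume_Ioc]; exact ENNReal.ofReal_lt_top⟩
  set ν : Measure (ℝ×ℝ) := μ1.prod μ1 with hν
  set C : ℝ := (Real.sqrt (2*π*σ))⁻¹ with hC
  have hC0 : 0 < C := by rw [hC]; positivity
  -- step 1
  have step1 : ∀ y : ℝ, (∫ x in (0:ℝ)..N, heatK σ (y - a * x))^2
      = ∫ p : ℝ×ℝ, heatK σ (y - a * p.1) * heatK σ (y - a * p.2) ∂ν := by
    intro y
    rw [intervalIntegral.integral_of_le hN.le, sq, hν,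
      MeasureTheory.integral_prod_mul (μ := μ1) (ν := μ1)
        (f := fun x => heatK σ (y - a * x)) (g := fun x => heatK σ (y - a * x))]
  -- integrability for swap
  have hFcont : Continuous (fun q : (ℝ×ℝ)×ℝ => heatK σ (q.2 - a*q.1.1) * heatK σ (q.2 - a*q.1.2)) := by
    apply Continuous.mul
    · exact heatK_cont.comp (continuous_snd.sub (continuous_const.mul (continuous_fst.fst)))
    · exact heatK_cont.comp (continuous_snd.sub (continuous_const.mul (continuous_fst.snd)))
  have hsec : ∀ p : ℝ×ℝ, Integrable (fun y => heatK σ (y - a*p.1) * heatK σ (y - a*p.2)) volume := by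
    intro p
    have hint2 : Integrable (fun y : ℝ => heatK σ (y - a*p.2)) volume :=
      (heatK_integrable hσ).comp_sub_right _
    refine Integrable.bdd_mul (c := C) hint2 ?_ (Filter.Eventually.of_forall fun y => ?_)
    · exact (heatK_cont.comp (continuous_id.sub continuous_const)).aestronglyMeasurable
    · rw [Real.norm_eq_abs, abs_of_nonneg (heatK_nonneg hσ _)]
      exact heatK_le hσ _
  have hFint : Integrable (fun q : (ℝ×ℝ)×ℝ => heatK σ (q.2 - a*q.1.1) * heatK σ (q.2 - a*q.1.2))
      (ν.prod volume) := by
    refine integrable_helper hFcont.aestronglyMeasurable hsec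
      (K := C * ∫ y : ℝ, heatK σ y) (fun p => ?_)
    have hintshift : Integrable (fun y : ℝ => heatK σ (y - a*p.1)) volume :=
      (heatK_integrable hσ).comp_sub_right _
    calc (∫ y : ℝ, ‖heatK σ (y - a*p.1) * heatK σ (y - a*p.2)‖)
        ≤ ∫ y : ℝ, C * heatK σ (y - a*p.1) := by
          refine integral_mono (hsec p).norm (hintshift.const_mul C) (fun y => ?_)
          rw [Real.norm_eq_abs, abs_of_nonneg (mul_nonneg (heatK_nonneg hσ _) (heatK_nonneg hσ _))]
          have h1 := heatK_le hσ (y - a*p.2)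
          have h2 := heatK_nonneg hσ (y - a*p.1)
          have h3 := heatK_nonneg hσ (y - a*p.2)
          calc heatK σ (y - a*p.1) * heatK σ (y - a*p.2) ≤ heatK σ (y - a*p.1) * C := by nlinarith
          _ = C * heatK σ (y - a*p.1) := mul_comm _ _
      _ = C * ∫ y : ℝ, heatK σ y := by
          rw [MeasureTheory.integral_const_mul,
            MeasureTheory.integral_sub_right_eq_self (μ := volume) (heatK σ) (a*p.1)]
  have hswap : Integrable (Function.uncurry fun (y : ℝ) (p : ℝ×ℝ) =>
      heatK σ (y - a*p.1) * heatK σ (y - a*p.2)) (volume.prod ν) := hFint.swap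
  calc ∫ y : ℝ, (∫ x in (0:ℝ)..N, heatK σ (y - a * x))^2
      = ∫ y : ℝ, ∫ p : ℝ×ℝ, heatK σ (y - a * p.1) * heatK σ (y - a * p.2) ∂ν := by
        exact integral_congr_ae (Filter.Eventually.of_forall step1)
    _ = ∫ p : ℝ×ℝ, (∫ y : ℝ, heatK σ (y - a * p.1) * heatK σ (y - a * p.2)) ∂ν :=
        MeasureTheory.integral_integral_swap hswap
    _ = ∫ p : ℝ×ℝ, heatK (2*σ) (a*p.1 - a*p.2) ∂ν := by
        refine integral_congr_ae (Filter.Eventually.of_forall (fun p => ?_))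
        exact heat_conv hσ (a*p.1) (a*p.2)
    _ = ∫ x in Ioc (0:ℝ) N, ∫ x' in Ioc (0:ℝ) N, heatK (2*σ) (a*x - a*x') := by
        rw [hν]
        refine MeasureTheory.integral_prod _ ?_
        refine integrable_of_bdd_cont ?_ (C := (Real.sqrt (2*π*(2*σ)))⁻¹) (fun p => ?_)
        · exact heatK_cont.comp ((continuous_const.mul continuous_fst).sub (continuous_const.mul continuous_snd))
        · rw [Real.norm_eq_abs, abs_of_nonneg (heatK_nonneg (by positivity) _)]
          exact heatK_le (by positivity) _

set_option maxHeartbeats 1000000 in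
lemma fubini_rhs {c : ℝ} (hc : 0 < c) :
    (∫ z : ℝ, φ z * Real.exp (-c * z^2))
      = ∫ r in Ioc (0:ℝ) 1, ∫ q in Ioc (0:ℝ) 1,
          (1/2) * (Real.sqrt (π/c) * Real.exp (-(r-q)^2 / (4*c))) := by
  set μ1 : Measure ℝ := volume.restrict (Ioc (0:ℝ) 1) with hμ1
  haveI hfin : IsFiniteMeasure μ1 :=
    ⟨by rw [hμ1, Measure.restrict_apply_univ, Real.volume_Ioc]; exact ENNReal.ofReal_lt_top⟩
  set ν : Measure (ℝ×ℝ) := μ1.prod μ1 with hν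
  have hexp : Integrable (fun z : ℝ => Real.exp (-c * z^2)) := integrable_exp_neg_mul_sq hc
  have step1 : ∀ z : ℝ, φ z * Real.exp (-c*z^2)
      = ∫ p : ℝ×ℝ, (1/2) * (Real.cos (z*(p.1-p.2)) * Real.exp (-c*z^2)) ∂ν := by
    intro z
    have hint : Integrable (fun p : ℝ×ℝ => Real.cos (z*(p.1-p.2))) ν := by
      refine integrable_of_bdd_cont (by fun_prop) (C := 1) (fun p => ?_)
      rw [Real.norm_eq_abs]; exact Real.abs_cos_le_one _
    have hprod : (∫ p : ℝ×ℝ, Real.cos (z*(p.1-p.2)) ∂ν)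
        = ∫ r in Ioc (0:ℝ) 1, ∫ q in Ioc (0:ℝ) 1, Real.cos (z*(r-q)) := by
      rw [hν]; exact MeasureTheory.integral_prod _ hint
    rw [phi_eq z]
    simp_rw [intervalIntegral.integral_of_le zero_le_one]
    rw [← hprod, MeasureTheory.integral_const_mul, MeasureTheory.integral_mul_const]
    ring
  have hFint : Integrable (fun q : (ℝ×ℝ)×ℝ =>
      (1/2) * (Real.cos (q.2*(q.1.1-q.1.2)) * Real.exp (-c*q.2^2))) (ν.prod volume) := by
    have hFc : Continuous (fun q : (ℝ×ℝ)×ℝ =>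
        (1/2 : ℝ) * (Real.cos (q.2*(q.1.1-q.1.2)) * Real.exp (-c*q.2^2))) :=
      continuous_const.mul ((Real.continuous_cos.comp
          (continuous_snd.mul ((continuous_fst.fst).sub (continuous_fst.snd)))).mul
        (Real.continuous_exp.comp (continuous_const.mul (continuous_snd.pow 2))))
    have hsec : ∀ p : ℝ×ℝ, Integrable
        (fun z : ℝ => (1/2) * (Real.cos (z*(p.1-p.2)) * Real.exp (-c*z^2))) volume := by
      intro p
      refine (Integrable.bdd_mul (c := 1) hexp ?_ (Filter.Eventually.of_forall fun z => ?_)).const_mul _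
      · exact (Real.continuous_cos.comp (continuous_id.mul continuous_const)).aestronglyMeasurable
      · rw [Real.norm_eq_abs]; exact Real.abs_cos_le_one _
    refine integrable_helper hFc.aestronglyMeasurable hsec
      (K := (1/2) * ∫ z : ℝ, Real.exp (-c*z^2)) (fun p => ?_)
    · calc (∫ z : ℝ, ‖(1/2) * (Real.cos (z*(p.1-p.2)) * Real.exp (-c*z^2))‖)
          ≤ ∫ z : ℝ, (1/2) * Real.exp (-c*z^2) := by
            refine integral_mono ?_ (hexp.const_mul _) (fun z => ?_)
            · exact (hsec p).norm
            · rw [Real.norm_eq_abs, abs_mul, abs_mul, abs_of_nonneg (Real.exp_pos _).le]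
              have h1 := Real.abs_cos_le_one (z*(p.1-p.2))
              have h2 := (Real.exp_pos (-c*z^2)).le
              calc |1/2| * (|Real.cos (z*(p.1-p.2))| * Real.exp (-c*z^2))
                  ≤ |1/2| * (1 * Real.exp (-c*z^2)) := by
                    refine mul_le_mul_of_nonneg_left ?_ (abs_nonneg _)
                    exact mul_le_mul_of_nonneg_right h1 h2
                _ = (1/2) * Real.exp (-c*z^2) := by norm_num
        _ = (1/2) * ∫ z : ℝ, Real.exp (-c*z^2) := MeasureTheory.integral_const_mul _ _
  have hswap : Integrable (Function.uncurry fun (z : ℝ) (p : ℝ×ℝ) =>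
      (1/2) * (Real.cos (z*(p.1-p.2)) * Real.exp (-c*z^2))) (volume.prod ν) := hFint.swap
  calc (∫ z : ℝ, φ z * Real.exp (-c * z^2))
      = ∫ z : ℝ, ∫ p : ℝ×ℝ, (1/2) * (Real.cos (z*(p.1-p.2)) * Real.exp (-c*z^2)) ∂ν :=
        integral_congr_ae (Filter.Eventually.of_forall step1)
    _ = ∫ p : ℝ×ℝ, (∫ z : ℝ, (1/2) * (Real.cos (z*(p.1-p.2)) * Real.exp (-c*z^2))) ∂ν :=
        MeasureTheory.integral_integral_swap hswap
    _ = ∫ p : ℝ×ℝ, (1/2) * (Real.sqrt (π/c) * Real.exp (-(p.1-p.2)^2 / (4*c))) ∂ν := by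
        refine integral_congr_ae (Filter.Eventually.of_forall (fun p => ?_))
        dsimp only
        rw [MeasureTheory.integral_const_mul]
        congr 1
        rw [← cos_gauss hc (p.1-p.2)]
        congr 1; ext z; rw [mul_comm z]
    _ = ∫ r in Ioc (0:ℝ) 1, ∫ q in Ioc (0:ℝ) 1,
          (1/2) * (Real.sqrt (π/c) * Real.exp (-(r-q)^2 / (4*c))) := by
        rw [hν]
        refine MeasureTheory.integral_prod _ ?_
        refine integrable_of_bdd_cont (by fun_prop) (C := (1/2) * Real.sqrt (π/c)) (fun p => ?_)
        rw [Real.norm_eq_abs, abs_of_nonneg (by positivity)]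
        have : Real.exp (-(p.1-p.2)^2 / (4*c)) ≤ 1 := by
          rw [Real.exp_le_one_iff, neg_div]
          have : (0:ℝ) ≤ (p.1-p.2)^2 / (4*c) := by positivity
          linarith
        nlinarith [Real.sqrt_nonneg (π/c)]

lemma bridge {N k : ℝ} (hN : 0 < N) :
    ∫ x in (0:ℝ)..N, ∫ x' in (0:ℝ)..N, Real.exp (-k * (x - x')^2)
      = N^2 * ∫ r in (0:ℝ)..1, ∫ q in (0:ℝ)..1, Real.exp (-(k*N^2) * (r - q)^2) := by
  have h1 : ∀ x : ℝ, (∫ x' in (0:ℝ)..N, Real.exp (-k * (x - x')^2))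
      = N * ∫ q in (0:ℝ)..1, Real.exp (-k * (x - N*q)^2) := by
    intro x
    have h := intervalIntegral.smul_integral_comp_mul_left
      (a := 0) (b := 1) (fun x' => Real.exp (-k*(x-x')^2)) N
    simp only [smul_eq_mul, mul_zero, mul_one] at h
    rw [← h]
  simp_rw [h1]
  rw [intervalIntegral.integral_const_mul]
  have h2 : (∫ x in (0:ℝ)..N, ∫ q in (0:ℝ)..1, Real.exp (-k * (x - N*q)^2))
      = N * ∫ r in (0:ℝ)..1, ∫ q in (0:ℝ)..1, Real.exp (-k * (N*r - N*q)^2) := by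
    have h := intervalIntegral.smul_integral_comp_mul_left
      (a := 0) (b := 1) (fun x => ∫ q in (0:ℝ)..1, Real.exp (-k*(x - N*q)^2)) N
    simp only [smul_eq_mul, mul_zero, mul_one] at h
    rw [← h]
  rw [h2]
  have h3 : ∀ r q : ℝ, -k * (N*r - N*q)^2 = -(k*N^2) * (r-q)^2 := by intros; ring
  simp_rw [h3]
  ring

lemma coeff {N s t : ℝ} (hN : 0 < N) (hs : 0 < s) (hst : s < t) :
    (Real.sqrt (2*π*(2*(s*(t-s)/t))))⁻¹ * N^2
      = N*t/(π*s) * (1/2 * Real.sqrt (π/(t*(t-s)/(N^2*s)))) := by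
  have ht : 0 < t := hs.trans hst
  have hts : 0 < t - s := by linarith
  have h1 : 0 < 2*π*(2*(s*(t-s)/t)) := by positivity
  have h2 : 0 < π/(t*(t-s)/(N^2*s)) := by positivity
  have hL : 0 ≤ (Real.sqrt (2*π*(2*(s*(t-s)/t))))⁻¹ * N^2 := by positivity
  have hR : 0 ≤ N*t/(π*s) * (1/2 * Real.sqrt (π/(t*(t-s)/(N^2*s)))) := by positivity
  rw [← Real.sqrt_sq hL, ← Real.sqrt_sq hR]
  congr 1
  rw [mul_pow, mul_pow, mul_pow, inv_pow, Real.sq_sqrt h1.le, Real.sq_sqrt h2.le]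
  have hπ := Real.pi_pos
  field_simp

theorem stmt_14 (N s t : ℝ) (hN : 0 < N) (hs : 0 < s) (hst : s < t) :
    (∫ y : ℝ, (∫ x in (0:ℝ)..N, heatK (s * (t - s) / t) (y - (s / t) * x)) ^ 2)
      = (N * t / (π * s)) *
          ∫ z : ℝ, φ z * Real.exp (-(t * (t - s) * z ^ 2 / (N ^ 2 * s))) := by
  have ht : 0 < t := hs.trans hst
  have hts : 0 < t - s := by linarith
  have hσ : 0 < s * (t - s) / t := by positivity
  have ha : 0 < s / t := by positivity
  have hc : 0 < t * (t - s) / (N^2 * s) := by positivity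
  have h2σ : 0 < 2 * (s * (t - s) / t) := by positivity
  -- LHS
  have lhs1 := fubini_lhs (σ := s * (t - s) / t) (a := s / t) hσ ha hN
  have conv1 : (∫ x in Ioc (0:ℝ) N, ∫ x' in Ioc (0:ℝ) N,
        heatK (2*(s*(t-s)/t)) ((s/t)*x - (s/t)*x'))
      = ∫ x in (0:ℝ)..N, ∫ x' in (0:ℝ)..N, heatK (2*(s*(t-s)/t)) ((s/t)*x - (s/t)*x') := by
    rw [intervalIntegral.integral_of_le hN.le]
    exact integral_congr_ae (Filter.Eventually.of_forall fun x =>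
      (intervalIntegral.integral_of_le hN.le).symm)
  have hexpand : ∀ x x' : ℝ, heatK (2*(s*(t-s)/t)) ((s/t)*x - (s/t)*x')
      = (Real.sqrt (2*π*(2*(s*(t-s)/t))))⁻¹
          * Real.exp (-((s/t)^2/(4*(s*(t-s)/t))) * (x - x')^2) := by
    intro x x'
    rw [heatK_eq h2σ]
    congr 1
    congr 1
    field_simp
    ring
  have hkk : (-1 : ℝ) / (4*(t*(t-s)/(N^2*s))) = -(((s/t)^2/(4*(s*(t-s)/t)))*N^2) := by
    field_simp
  calc (∫ y : ℝ, (∫ x in (0:ℝ)..N, heatK (s * (t - s) / t) (y - (s / t) * x)) ^ 2)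
      = ∫ x in (0:ℝ)..N, ∫ x' in (0:ℝ)..N, heatK (2*(s*(t-s)/t)) ((s/t)*x - (s/t)*x') := by
        rw [lhs1, conv1]
    _ = (Real.sqrt (2*π*(2*(s*(t-s)/t))))⁻¹
          * ∫ x in (0:ℝ)..N, ∫ x' in (0:ℝ)..N,
              Real.exp (-((s/t)^2/(4*(s*(t-s)/t))) * (x - x')^2) := by
        simp_rw [hexpand, intervalIntegral.integral_const_mul]
    _ = (Real.sqrt (2*π*(2*(s*(t-s)/t))))⁻¹ * (N^2 *
          ∫ r in (0:ℝ)..1, ∫ q in (0:ℝ)..1,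
            Real.exp (-(((s/t)^2/(4*(s*(t-s)/t)))*N^2) * (r - q)^2)) := by
        rw [bridge hN]
    _ = (N * t / (π * s)) *
          ∫ z : ℝ, φ z * Real.exp (-(t * (t - s) * z ^ 2 / (N ^ 2 * s))) := by
        have hrw : ∀ z : ℝ, -(t * (t - s) * z ^ 2 / (N ^ 2 * s))
            = -(t*(t-s)/(N^2*s)) * z^2 := fun z => by ring
        simp_rw [hrw]
        rw [fubini_rhs hc]
        have conv2 : (∫ r in Ioc (0:ℝ) 1, ∫ q in Ioc (0:ℝ) 1,
              (1/2) * (Real.sqrt (π/(t*(t-s)/(N^2*s)))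
                * Real.exp (-(r-q)^2 / (4*(t*(t-s)/(N^2*s))))))
            = ∫ r in (0:ℝ)..1, ∫ q in (0:ℝ)..1,
              (1/2) * (Real.sqrt (π/(t*(t-s)/(N^2*s)))
                * Real.exp (-(r-q)^2 / (4*(t*(t-s)/(N^2*s))))) := by
          rw [intervalIntegral.integral_of_le zero_le_one]
          exact integral_congr_ae (Filter.Eventually.of_forall fun r =>
            (intervalIntegral.integral_of_le zero_le_one).symm)
        rw [conv2]
        have harg : ∀ r q : ℝ, (1/2 : ℝ) * (Real.sqrt (π/(t*(t-s)/(N^2*s)))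
              * Real.exp (-(r-q)^2 / (4*(t*(t-s)/(N^2*s)))))
            = ((1/2) * Real.sqrt (π/(t*(t-s)/(N^2*s))))
              * Real.exp (-(((s/t)^2/(4*(s*(t-s)/t)))*N^2) * (r - q)^2) := by
          intro r q
          rw [show -(r-q)^2 / (4*(t*(t-s)/(N^2*s)))
              = ((-1:ℝ)/(4*(t*(t-s)/(N^2*s)))) * (r-q)^2 from by ring, hkk]
          ring
        simp_rw [harg, intervalIntegral.integral_const_mul]
        have hco := coeff hN hs hst
        set D := ∫ r in (0:ℝ)..1, ∫ q in (0:ℝ)..1,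
          Real.exp (-(((s/t)^2/(4*(s*(t-s)/t)))*N^2) * (r - q)^2) with hD
        linear_combination D * hco
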